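/- Let F(t₁,t₂,t₃,t₄) = (1/3)t₁t₃t₄ + (1/6)t₂t₃² + (i/(36√3))t₄t₁⁴ + (i/(6√3))t₂t₄t₁² + t₂⁴/216 + (i/(6√3))t₂²t₄ + (1/6)t₄²·log t₄ and F_{B₄}(x₁,x₂,x₃,x₄) = (1/108)x₄x₁⁴ + (1/6)x₂x₄x₁² + x₃x₄x₁ − x₂⁴/72 + (1/2)x₂x₃² + (1/2)x₂²x₄ + (3/2)x₄²·Log x₄, where Log is the principal branch of the complex logarithm. Then for all t₁, t₂, t₃ ∈ ℂ and all real t₄ > 0: F_{B₄}(−i√3·t₁, −t₂, t₃, −(i/√3)·t₄) = −3·F(t₁,t₂,t₃,t₄) + ((log 3)/4 + iπ/4)·t₄². (Hence the logarithmic Dubrovin–Frobenius manifold obtained from gl₄ is equivalent to the one on the orbit space of the reflection group B₄, since potentials differing by a constant rescaling of the flat coordinates, an overall factor, and a quadratic polynomial define equivalent Frobenius structures.) -/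

import Mathlib

/-- The potential (frob4) of the logarithmic Dubrovin–Frobenius manifold for `gl₄`,
with `t₁, t₂, t₃` complex and `t₄` real positive (real natural logarithm). -/
noncomputable def Fgl4 (t1 t2 t3 : ℂ) (t4 : ℝ) : ℂ :=
  (1 / 3 : ℂ) * t1 * t3 * (t4 : ℂ) + (1 / 6 : ℂ) * t2 * t3 ^ 2 +
    (Complex.I / (36 * (Real.sqrt 3 : ℂ))) * (t4 : ℂ) * t1 ^ 4 +
    (Complex.I / (6 * (Real.sqrt 3 : ℂ))) * t2 * (t4 : ℂ) * t1 ^ 2 +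
    t2 ^ 4 / 216 +
    (Complex.I / (6 * (Real.sqrt 3 : ℂ))) * t2 ^ 2 * (t4 : ℂ) +
    (1 / 6 : ℂ) * (t4 : ℂ) ^ 2 * (Real.log t4 : ℂ)

/-- The Arsie–Lorenzoni–Mencattini–Moroni potential on the orbit space of `B₄`,
with `Log` the principal branch of the complex logarithm. -/
noncomputable def FB4 (x1 x2 x3 x4 : ℂ) : ℂ :=
  (1 / 108 : ℂ) * x4 * x1 ^ 4 + (1 / 6 : ℂ) * x2 * x4 * x1 ^ 2 + x3 * x4 * x1 -
    x2 ^ 4 / 72 + (1 / 2 : ℂ) * x2 * x3 ^ 2 + (1 / 2 : ℂ) * x2 ^ 2 * x4 +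
    (3 / 2 : ℂ) * x4 ^ 2 * Complex.log x4

open Complex

/- With `w = i√3`, so that `w² = -3` and `i/√3 = w/3`, the substitution turns the polynomial part
of `F_{B₄}` into `-3` times that of `F` once powers of `w` are reduced. The logarithmic terms differ
by `Log(-i/√3) = -(log 3)/2 - iπ/2`, which produces the quadratic correction. -/

lemma Complex.div_ofReal_sqrt (z : ℂ) {a : ℝ} (ha : 0 < a) :
    z / (Real.sqrt a : ℂ) = z * Real.sqrt a / a := by
  have hsq : ((Real.sqrt a : ℝ) : ℂ) ^ 2 = a := by
    rw [← ofReal_pow, Real.sq_sqrt ha.le]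
  have hne : ((Real.sqrt a : ℝ) : ℂ) ≠ 0 := ofReal_ne_zero.2 (Real.sqrt_pos.2 ha).ne'
  have ha' : (a : ℂ) ≠ 0 := ofReal_ne_zero.2 ha.ne'
  field_simp
  rw [hsq]

lemma Complex.log_neg_I_div_ofReal_mul {c t : ℝ} (hc : 0 < c) (ht : 0 < t) :
    log (-(I / c) * t) = Real.log t - Real.log c - Real.pi / 2 * I := by
  have hsplit : -(I / c) * t = ((t / c : ℝ) : ℂ) * (-I) := by
    push_cast
    ring
  rw [hsplit, log_ofReal_mul (by positivity) (neg_ne_zero.2 I_ne_zero), log_neg_I,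
    Real.log_div ht.ne' hc.ne']
  push_cast
  ring

/-- for all `t₁, t₂, t₃ ∈ ℂ` and real `t₄ > 0`,
`F_{B₄}(−i√3·t₁, −t₂, t₃, −(i/√3)·t₄) = −3·F(t₁,t₂,t₃,t₄) + ((log 3)/4 + iπ/4)·t₄²`. -/
theorem gl4_equiv_B4 :
    ∀ (t1 t2 t3 : ℂ) (t4 : ℝ), 0 < t4 →
      FB4 (-(Complex.I * (Real.sqrt 3 : ℂ)) * t1) (-t2) t3
          (-(Complex.I / (Real.sqrt 3 : ℂ)) * (t4 : ℂ)) =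
        -3 * Fgl4 t1 t2 t3 t4 +
          ((Real.log 3 : ℂ) / 4 + Complex.I * (Real.pi : ℂ) / 4) * (t4 : ℂ) ^ 2 := by
  intro t1 t2 t3 t4 ht4
  have h3 : (0 : ℝ) < 3 := by norm_num
  rw [FB4, Fgl4, log_neg_I_div_ofReal_mul (Real.sqrt_pos.2 h3) ht4, Real.log_sqrt h3.le,
    div_mul_eq_div_div_swap, div_mul_eq_div_div_swap, div_ofReal_sqrt I h3]
  push_cast
  set w : ℂ := I * Real.sqrt 3
  have hw : w ^ 2 = -3 := by
    rw [mul_pow, I_sq, ← ofReal_pow, Real.sq_sqrt h3.le]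
    push_cast
    ring
  linear_combination
    (-(w * (w ^ 2 - 3) / 324) * t4 * t1 ^ 4 + w / 18 * t2 * t4 * t1 ^ 2 + 1 / 3 * t1 * t3 * t4
      + t4 ^ 2 * (Real.log t4 / 6 - Real.log 3 / 12 - Real.pi * I / 12)) * hw
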